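/- Define block lengths ℓ_1 = 1 and ℓ_i = i · ∑_{k=1}^{i-1} ℓ_k for i ≥ 2, and let a : ℕ → ℝ be the 0–1 sequence whose i-th consecutive block has length ℓ_i and constant value 0 if i is odd, 1 if i is even. Then its Birkhoff averages B_n satisfy liminf B_n = 0 and limsup B_n = 1, and for every k ≥ 0 the Hölder means satisfy liminf_n H^{(k)}_n = 0 and limsup_n H^{(k)}_n = 1 (type B2). -/

import Mathlib

/-!
Block `i` occupies `[S (i - 1), S i)` with `S i = ∑_{k ≤ i} ℓ k = (i + 1) S (i - 1)`, so it
covers all but a fraction `1 / (i + 1)` of `[0, S i)`. After an odd block `B n ≤ S (i - 1) / n`,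
which is `≤ ε` on the whole interval `[ε S i, S i]` once `i` is large; after an even block the
same holds for `1 - B`. Being `≤ ε` on arbitrarily late intervals `[ε N, N]`, for every `ε`,
survives Cesàro averaging of a sequence bounded by `1`: the indices below `δ N` contribute at
most `δ N`, the others at most `δ` each. Hence every Hölder mean is frequently `≤ ε` and
frequently `≥ 1 - ε`.
-/

open Filter Topology

/-- Birkhoff averages: `birk a n = (1/n) * ∑_{i=0}^{n-1} a i` (junk value `0` at `n = 0`). -/
noncomputable def birk (a : ℕ → ℝ) (n : ℕ) : ℝ := (∑ i ∈ Finset.range n, a i) / n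

/-- Iterated Hölder means of a sequence `b` (indexed from 1):
`holderMeans b 0 n = b n` and `holderMeans b (k+1) n = (1/n) * ∑_{i=1}^n holderMeans b k i`. -/
noncomputable def holderMeans (b : ℕ → ℝ) : ℕ → ℕ → ℝ
  | 0, n => b n
  | k+1, n => (∑ i ∈ Finset.Icc 1 n, holderMeans b k i) / n

open Finset

def IsSmallOnLongIntervals (H : ℕ → ℝ) : Prop :=
  ∀ ε : ℝ, 0 < ε → ε ≤ 1 → ∀ M : ℝ, ∃ N : ℕ, M ≤ ε * N ∧
    ∀ n : ℕ, ε * N ≤ n → n ≤ N → H n ≤ ε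

namespace IsSmallOnLongIntervals

variable {H G : ℕ → ℝ}

theorem congr (hH : IsSmallOnLongIntervals H) (h : H =ᶠ[atTop] G) :
    IsSmallOnLongIntervals G := by
  obtain ⟨K, hK⟩ := eventually_atTop.1 h
  intro ε hε hε1 M
  obtain ⟨N, hMN, hN⟩ := hH ε hε hε1 (max M K)
  refine ⟨N, (le_max_left _ _).trans hMN, fun n hn hnN => ?_⟩
  have hKn : K ≤ n := by exact_mod_cast ((le_max_right M K).trans hMN).trans hn
  exact hK n hKn ▸ hN n hn hnN

theorem frequently_le (hH : IsSmallOnLongIntervals H) {ε : ℝ} (hε : 0 < ε) :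
    ∃ᶠ n in atTop, H n ≤ ε := by
  rw [frequently_atTop]
  intro M
  obtain ⟨N, hMN, hN⟩ := hH (min ε 1) (lt_min hε one_pos) (min_le_right _ _) M
  have hδN : min ε 1 * N ≤ N := mul_le_of_le_one_left (Nat.cast_nonneg _) (min_le_right _ _)
  exact ⟨N, by exact_mod_cast hMN.trans hδN, (hN N hδN le_rfl).trans (min_le_left _ _)⟩

theorem cesaro (h1 : ∀ n, H n ≤ 1) (hH : IsSmallOnLongIntervals H) :
    IsSmallOnLongIntervals fun n => (∑ i ∈ Icc 1 n, H i) / n := by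
  intro ε hε hε1 M
  set δ := ε ^ 2 / 2 with hδ
  have hδ0 : 0 < δ := by positivity
  have hδε : δ ≤ ε / 2 := by nlinarith
  obtain ⟨N, hMN, hN⟩ := hH δ hδ0 (by linarith) M
  have hδN : δ * N ≤ ε * N := by gcongr; linarith
  refine ⟨N, hMN.trans hδN, fun n hn hnN => ?_⟩
  set K := ⌊δ * N⌋₊
  have hK : (K : ℝ) ≤ δ * N := Nat.floor_le (by positivity)
  have hKn : K ≤ n := by exact_mod_cast hK.trans (hδN.trans hn)
  have hhead : ∑ i ∈ Ioc 0 K, H i ≤ δ * N := by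
    calc ∑ i ∈ Ioc 0 K, H i ≤ #(Ioc 0 K) • (1 : ℝ) := sum_le_card_nsmul _ _ _ fun i _ => h1 i
      _ ≤ δ * N := by simpa using hK
  have htail : ∑ i ∈ Ioc K n, H i ≤ δ * n := by
    calc ∑ i ∈ Ioc K n, H i ≤ #(Ioc K n) • δ := by
          refine sum_le_card_nsmul _ _ _ fun i hi => hN i ?_ ((mem_Ioc.1 hi).2.trans hnN)
          exact ((Nat.floor_lt (by positivity)).1 (mem_Ioc.1 hi).1).le
      _ ≤ δ * n := by
          rw [Nat.card_Ioc, nsmul_eq_mul, mul_comm]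
          gcongr
          exact_mod_cast Nat.sub_le n K
  have hsum : ∑ i ∈ Icc 1 n, H i = ∑ i ∈ Ioc 0 K, H i + ∑ i ∈ Ioc K n, H i := by
    rw [sum_Ioc_consecutive _ (Nat.zero_le K) hKn, ← Icc_add_one_left_eq_Ioc, zero_add]
  have hδNn : δ * N ≤ ε / 2 * n := by
    calc δ * N = ε / 2 * (ε * N) := by rw [hδ]; ring
      _ ≤ ε / 2 * n := by gcongr
  have hδn : δ * n ≤ ε / 2 * n := by gcongr
  refine div_le_of_le_mul₀ (Nat.cast_nonneg _) hε.le ?_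
  linarith

end IsSmallOnLongIntervals

theorem liminf_eq_zero_of_isSmallOnLongIntervals {H : ℕ → ℝ} (h0 : ∀ n, 0 ≤ H n)
    (h1 : ∀ n, H n ≤ 1) (hH : IsSmallOnLongIntervals H) : liminf H atTop = 0 := by
  refine le_antisymm (le_of_forall_pos_le_add fun ε hε => ?_)
    (le_liminf_of_le (isBoundedUnder_of ⟨1, h1⟩).isCoboundedUnder_ge (.of_forall h0))
  simpa using liminf_le_of_frequently_le (hH.frequently_le hε) (isBoundedUnder_of ⟨0, h0⟩)

theorem limsup_eq_one_of_isSmallOnLongIntervals_one_sub {H : ℕ → ℝ} (h0 : ∀ n, 0 ≤ H n)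
    (h1 : ∀ n, H n ≤ 1) (hH : IsSmallOnLongIntervals fun n => 1 - H n) :
    limsup H atTop = 1 := by
  refine le_antisymm
    (limsup_le_of_le (isBoundedUnder_of ⟨0, h0⟩).isCoboundedUnder_le (.of_forall h1))
    (le_of_forall_pos_le_add fun ε hε => ?_)
  have hfreq : ∃ᶠ n in atTop, 1 - ε ≤ H n :=
    (hH.frequently_le hε).mono fun n hn => by linarith
  linarith [le_limsup_of_frequently_le hfreq (isBoundedUnder_of ⟨1, h1⟩)]

section HolderMeans

variable {b : ℕ → ℝ}

theorem holderMeans_nonneg (h0 : ∀ n, 0 ≤ b n) (k n : ℕ) : 0 ≤ holderMeans b k n := by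
  induction k generalizing n with
  | zero => exact h0 n
  | succ k ih => exact div_nonneg (sum_nonneg fun i _ => ih i) (Nat.cast_nonneg n)

theorem holderMeans_le_one (h1 : ∀ n, b n ≤ 1) (k n : ℕ) : holderMeans b k n ≤ 1 := by
  induction k generalizing n with
  | zero => exact h1 n
  | succ k ih =>
    refine div_le_one_of_le₀ ?_ (Nat.cast_nonneg n)
    simpa using sum_le_card_nsmul (Icc 1 n) _ _ fun i _ => ih i

theorem holderMeans_one_sub (b : ℕ → ℝ) (k : ℕ) {n : ℕ} (hn : 0 < n) :
    holderMeans (fun n => 1 - b n) k n = 1 - holderMeans b k n := by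
  induction k generalizing n with
  | zero => rfl
  | succ k ih =>
    simp only [holderMeans]
    rw [sum_congr rfl fun i hi => ih (mem_Icc.1 hi).1, sum_sub_distrib, sum_const,
      Nat.card_Icc, nsmul_eq_mul, mul_one, Nat.add_sub_cancel]
    field_simp

theorem IsSmallOnLongIntervals.holderMeans (h1 : ∀ n, b n ≤ 1)
    (hb : IsSmallOnLongIntervals b) (k : ℕ) : IsSmallOnLongIntervals (holderMeans b k) := by
  induction k with
  | zero => exact hb
  | succ k ih => exact ih.cesaro (holderMeans_le_one h1 k)

theorem liminf_holderMeans_eq_zero_and_limsup_eq_one (h0 : ∀ n, 0 ≤ b n) (h1 : ∀ n, b n ≤ 1)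
    (hsmall : IsSmallOnLongIntervals b) (hlarge : IsSmallOnLongIntervals fun n => 1 - b n)
    (k : ℕ) :
    liminf (fun n => holderMeans b k n) atTop = 0 ∧
      limsup (fun n => holderMeans b k n) atTop = 1 := by
  have hlarge_k : IsSmallOnLongIntervals fun n => 1 - holderMeans b k n :=
    (hlarge.holderMeans (fun n => by linarith [h0 n]) k).congr
      (eventually_atTop.2 ⟨1, fun n hn => holderMeans_one_sub b k hn⟩)
  exact ⟨liminf_eq_zero_of_isSmallOnLongIntervals (holderMeans_nonneg h0 k)
      (holderMeans_le_one h1 k) (hsmall.holderMeans h1 k),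
    limsup_eq_one_of_isSmallOnLongIntervals_one_sub (holderMeans_nonneg h0 k)
      (holderMeans_le_one h1 k) hlarge_k⟩

end HolderMeans

section Birkhoff

variable {a : ℕ → ℝ}

theorem birk_nonneg (h0 : ∀ n, 0 ≤ a n) (n : ℕ) : 0 ≤ birk a n :=
  div_nonneg (sum_nonneg fun i _ => h0 i) (Nat.cast_nonneg n)

theorem birk_le_one (h1 : ∀ n, a n ≤ 1) (n : ℕ) : birk a n ≤ 1 :=
  div_le_one_of_le₀ (by simpa using sum_le_card_nsmul (range n) _ _ fun i _ => h1 i)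
    (Nat.cast_nonneg n)

theorem birk_one_sub (a : ℕ → ℝ) {n : ℕ} (hn : 0 < n) :
    birk (fun n => 1 - a n) n = 1 - birk a n := by
  simp only [birk, sum_sub_distrib, sum_const, card_range, nsmul_eq_mul, mul_one]
  field_simp

def VanishesOnLongBlocks (a : ℕ → ℝ) : Prop :=
  ∀ δ : ℝ, 0 < δ → ∀ M : ℝ, ∃ s t : ℕ, M ≤ s ∧ (s : ℝ) ≤ δ * t ∧
    ∀ n, s ≤ n → n < t → a n = 0

theorem isSmallOnLongIntervals_birk (h1 : ∀ n, a n ≤ 1) (ha : VanishesOnLongBlocks a) :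
    IsSmallOnLongIntervals (birk a) := by
  intro ε hε hε1 M
  obtain ⟨s, t, hMs, hst, hzero⟩ := ha (ε ^ 2) (by positivity) M
  have hst' : (s : ℝ) ≤ ε * t := hst.trans (by gcongr; nlinarith)
  refine ⟨t, hMs.trans hst', fun n hn hnt => ?_⟩
  have hsn : s ≤ n := by exact_mod_cast hst'.trans hn
  have hprefix : ∑ i ∈ range n, a i = ∑ i ∈ range s, a i := by
    rw [← sum_range_add_sum_Ico _ hsn,
      sum_eq_zero fun i hi => hzero i (mem_Ico.1 hi).1 ((mem_Ico.1 hi).2.trans_le hnt), add_zero]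
  have hbound : ∑ i ∈ range s, a i ≤ s := by
    simpa using sum_le_card_nsmul (range s) _ _ fun i _ => h1 i
  refine div_le_of_le_mul₀ (Nat.cast_nonneg _) hε.le ?_
  rw [hprefix]
  nlinarith [mul_le_mul_of_nonneg_left hn hε.le]

theorem isSmallOnLongIntervals_one_sub_birk (h0 : ∀ n, 0 ≤ a n)
    (ha : VanishesOnLongBlocks fun n => 1 - a n) :
    IsSmallOnLongIntervals fun n => 1 - birk a n :=
  (isSmallOnLongIntervals_birk (fun n => by linarith [h0 n]) ha).congr
    (eventually_atTop.2 ⟨1, fun n hn => birk_one_sub a hn⟩)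

end Birkhoff

def blockEnd (ℓ : ℕ → ℕ) (i : ℕ) : ℕ := ∑ k ∈ Icc 1 i, ℓ k

section Blocks

variable {ℓ : ℕ → ℕ}

theorem blockEnd_succ (i : ℕ) : blockEnd ℓ (i + 1) = blockEnd ℓ i + ℓ (i + 1) :=
  sum_Icc_succ_top (Nat.le_add_left 1 i) ℓ

theorem blockEnd_succ_succ (hℓ : ∀ i, 2 ≤ i → ℓ i = i * blockEnd ℓ (i - 1)) (i : ℕ) :
    blockEnd ℓ (i + 2) = (i + 3) * blockEnd ℓ (i + 1) := by
  have hℓi : ℓ (i + 2) = (i + 2) * blockEnd ℓ (i + 1) := hℓ (i + 2) (Nat.le_add_left 2 i)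
  rw [blockEnd_succ, hℓi]
  ring

theorem succ_le_blockEnd_succ (hℓ1 : ℓ 1 = 1)
    (hℓ : ∀ i, 2 ≤ i → ℓ i = i * blockEnd ℓ (i - 1)) (i : ℕ) : i + 1 ≤ blockEnd ℓ (i + 1) := by
  induction i with
  | zero => simp [blockEnd, hℓ1]
  | succ i ih =>
    rw [blockEnd_succ_succ hℓ]
    nlinarith

theorem exists_mem_block (hℓ1 : ℓ 1 = 1) (hℓ : ∀ i, 2 ≤ i → ℓ i = i * blockEnd ℓ (i - 1))
    (n : ℕ) : ∃ i, 1 ≤ i ∧ blockEnd ℓ (i - 1) ≤ n ∧ n < blockEnd ℓ i := by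
  have hex : ∃ i, n < blockEnd ℓ i := ⟨n + 1, succ_le_blockEnd_succ hℓ1 hℓ n⟩
  have hpos : Nat.find hex ≠ 0 := fun h => by
    have hn := Nat.find_spec hex
    rw [h] at hn
    simp [blockEnd] at hn
  exact ⟨Nat.find hex, Nat.one_le_iff_ne_zero.2 hpos,
    not_lt.1 (Nat.find_min hex (by omega)), Nat.find_spec hex⟩

theorem exists_long_block (hℓ1 : ℓ 1 = 1) (hℓ : ∀ i, 2 ≤ i → ℓ i = i * blockEnd ℓ (i - 1))
    (p : ℕ) {δ : ℝ} (hδ : 0 < δ) (M : ℝ) :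
    ∃ i, 1 ≤ i ∧ i % 2 = p % 2 ∧ M ≤ blockEnd ℓ (i - 1) ∧
      (blockEnd ℓ (i - 1) : ℝ) ≤ δ * blockEnd ℓ i := by
  set j := ⌈max M δ⁻¹⌉₊
  have hj : max M δ⁻¹ ≤ j := Nat.le_ceil _
  have hlen : (2 * j + p + 1 : ℝ) ≤ blockEnd ℓ (2 * j + p + 1) := by
    exact_mod_cast succ_le_blockEnd_succ hℓ1 hℓ (2 * j + p)
  refine ⟨2 * j + p + 2, by omega, by omega, ?_, ?_⟩
  all_goals rw [show 2 * j + p + 2 - 1 = 2 * j + p + 1 by omega]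
  · linarith [le_max_left M δ⁻¹, (Nat.cast_nonneg p : (0 : ℝ) ≤ p)]
  · have hδj : 1 ≤ δ * (2 * j + p + 3) := by
      have : 1 ≤ δ * j := by
        rw [← mul_inv_cancel₀ hδ.ne']
        exact mul_le_mul_of_nonneg_left ((le_max_right M δ⁻¹).trans hj) hδ.le
      nlinarith [(Nat.cast_nonneg p : (0 : ℝ) ≤ p), (Nat.cast_nonneg j : (0 : ℝ) ≤ j)]
    rw [blockEnd_succ_succ hℓ]
    push_cast
    nlinarith [(Nat.cast_nonneg _ : (0 : ℝ) ≤ blockEnd ℓ (2 * j + p + 1))]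

end Blocks

/-- **Example 2.**  Define block lengths `ℓ 1 = 1` and `ℓ i = i * ∑_{k=1}^{i-1} ℓ k`
for `i ≥ 2`, and let `a` be the 0–1 sequence whose `i`-th consecutive block (of
length `ℓ i`, occupying positions `∑_{k<i} ℓ k ≤ n < ∑_{k≤i} ℓ k`) has constant
value `0` for `i` odd and `1` for `i` even.  Then `liminf B = 0`, `limsup B = 1`,
and all Hölder means have `liminf = 0` and `limsup = 1` (type B2). -/
theorem exampleTwo_type_B2 (ℓ : ℕ → ℕ) (hℓ1 : ℓ 1 = 1)
    (hℓ : ∀ i : ℕ, 2 ≤ i → ℓ i = i * ∑ k ∈ Finset.Icc 1 (i - 1), ℓ k)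
    (a : ℕ → ℝ)
    (ha : ∀ i : ℕ, 1 ≤ i → ∀ n : ℕ,
      (∑ k ∈ Finset.Icc 1 (i - 1), ℓ k) ≤ n → n < ∑ k ∈ Finset.Icc 1 i, ℓ k →
      a n = if i % 2 = 0 then 1 else 0) :
    liminf (birk a) atTop = 0 ∧ limsup (birk a) atTop = 1 ∧
    ∀ k : ℕ, liminf (fun n : ℕ => holderMeans (birk a) k n) atTop = 0 ∧
      limsup (fun n : ℕ => holderMeans (birk a) k n) atTop = 1 := by
  have hblock : ∀ i, 1 ≤ i → ∀ n, blockEnd ℓ (i - 1) ≤ n → n < blockEnd ℓ i →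
      a n = if i % 2 = 0 then 1 else 0 := ha
  have hbounds : ∀ n, 0 ≤ a n ∧ a n ≤ 1 := fun n => by
    obtain ⟨i, hi, hlo, hhi⟩ := exists_mem_block hℓ1 hℓ n
    rw [hblock i hi n hlo hhi]
    split_ifs <;> norm_num
  have hvanish (p : ℕ) (f : ℝ → ℝ) (hf : f (if p % 2 = 0 then 1 else 0) = 0) :
      VanishesOnLongBlocks fun n => f (a n) := fun δ hδ M => by
    obtain ⟨i, hi, hpar, hM, hlong⟩ := exists_long_block hℓ1 hℓ p hδ M
    refine ⟨_, _, hM, hlong, fun n hlo hhi => ?_⟩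
    show f (a n) = 0
    rw [hblock i hi n hlo hhi, hpar, hf]
  have key := liminf_holderMeans_eq_zero_and_limsup_eq_one
    (birk_nonneg fun n => (hbounds n).1) (birk_le_one fun n => (hbounds n).2)
    (isSmallOnLongIntervals_birk (fun n => (hbounds n).2) (hvanish 1 id (by simp)))
    (isSmallOnLongIntervals_one_sub_birk (fun n => (hbounds n).1)
      (hvanish 0 (fun x => 1 - x) (by simp)))
  exact ⟨(key 0).1, (key 0).2, key⟩
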